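/- Let S = {38, 39, 88, 89, 101, 102, 103, 104}. Then ⋃_{i∈S} F_i(□) = [0,1]×[1/4,3/4] (each of these eight maps has contraction ratio 1/4 and the eight quarter-squares tile the horizontal middle strip), and moreover ⋃_{i∈S} F_i(K) = K ∩ ([0,1]×[1/4,3/4]). -/

import Mathlib

/-!
`K` lies in the unit square, because every `F_i` maps the square into itself, and `K` contains the
bottom and the top edge of the square, because each edge is covered by `F_i`-images of itself and
a compact set with that property lies in the attractor.

The eight maps `F_i`, `i ∈ S`, are homotheties of ratio `1/4` onto the eight quarter squares of
the middle strip, whereas every other first-level cell lies in the bottom or the top row of quarter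
squares. Hence a point of `K` strictly inside the strip lies in a cell of `S`, and a point of `K`
on the line `y = 1/4` or `y = 3/4` is the image under a map of `S` of a point of the bottom or top
edge.
-/

noncomputable section

/-- The plane ℝ² with the Euclidean metric. -/
abbrev Plane : Type := EuclideanSpace ℝ (Fin 2)

/-- The point (s, t) ∈ ℝ². -/
def pt (s t : ℝ) : Plane := WithLp.toLp 2 ![s, t]

/-- The unit square □ = [0,1] × [0,1]. -/
def unitSq : Set Plane := {z : Plane | z 0 ∈ Set.Icc (0:ℝ) 1 ∧ z 1 ∈ Set.Icc (0:ℝ) 1}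

/-- Vertical reflection Γ_v(x₁,x₂) = (x₁, 1-x₂). -/
def Γv : Plane → Plane := fun x => pt (x 0) (1 - x 1)

/-- Horizontal reflection Γ_h(x₁,x₂) = (1-x₁, x₂). -/
def Γh : Plane → Plane := fun x => pt (1 - x 0) (x 1)

/-- Diagonal reflection Γ_{d₁}(x₁,x₂) = (x₂, x₁). -/
def Γd₁ : Plane → Plane := fun x => pt (x 1) (x 0)

/-- Anti-diagonal reflection Γ_{d₂}(x₁,x₂) = (1-x₂, 1-x₁). -/
def Γd₂ : Plane → Plane := fun x => pt (1 - x 1) (1 - x 0)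

/-- Counter-clockwise rotation by π/2 around the center: Γ_{r₁}(x₁,x₂) = (1-x₂, x₁).
    The rotations Γ_{r_j} are `Γr^[j]`, and Γ_{r₄} = `Γr^[4]` = id. -/
def Γr : Plane → Plane := fun x => pt (1 - x 1) (x 0)

/-- The basic contraction ratio a = √(7/24) − 1/2. -/
def aa : ℝ := Real.sqrt (7/24) - 1/2

/-- The maps F_i for 1 ≤ i ≤ 13:
    F_{2j+1}(x) = a·x + (j/24, 0) (0 ≤ j ≤ 5), F_{2j+2}(x) = a²·x + (a + j/24, 0) (0 ≤ j ≤ 5),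
    F_{13}(x) = (1/4)·x + (1/4, 0). -/
def Fbase : ℕ → Plane → Plane := fun i x =>
  if i = 13 then (1/4 : ℝ) • x + pt (1/4) 0
  else if i % 2 = 1 then aa • x + pt ((((i - 1) / 2 : ℕ) : ℝ) / 24) 0
  else aa ^ 2 • x + pt (aa + (((i - 2) / 2 : ℕ) : ℝ) / 24) 0

/-- The maps F_i for 1 ≤ i ≤ 26: F_i = Γ_h ∘ F_{27-i} ∘ Γ_h for 14 ≤ i ≤ 26. -/
def Fq : ℕ → Plane → Plane := fun i =>
  if i ≤ 13 then Fbase i else Γh ∘ Fbase (27 - i) ∘ Γh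

/-- The full iterated function system F_1, …, F_104:
    F_{i+25j} = Γ_{r_j} ∘ F_i ∘ Γ_{r_{4-j}} for 1 ≤ i ≤ 25, 1 ≤ j ≤ 3 (here for
    27 ≤ i ≤ 100 one has j = (i-1)/25 ∈ {1,2,3} and i - 25j ∈ {1,…,25});
    F_{101},…,F_{104} are the four central quarter squares. -/
def Fmap : ℕ → Plane → Plane := fun i =>
  if i ≤ 26 then Fq i
  else if i ≤ 100 then Γr^[(i - 1) / 25] ∘ Fq (i - 25 * ((i - 1) / 25)) ∘ Γr^[4 - (i - 1) / 25]
  else if i = 101 then fun x => (1/4 : ℝ) • x + pt (1/4) (1/4)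
  else if i = 102 then fun x => (1/4 : ℝ) • x + pt (1/2) (1/4)
  else if i = 103 then fun x => (1/4 : ℝ) • x + pt (1/2) (1/2)
  else fun x => (1/4 : ℝ) • x + pt (1/4) (1/2)

/-- The contraction ratio of F_i for 1 ≤ i ≤ 13. -/
def ρbase : ℕ → ℝ := fun i =>
  if i = 13 then 1/4 else if i % 2 = 1 then aa else aa ^ 2

/-- The contraction ratio of F_i for 1 ≤ i ≤ 26. -/
def ρq : ℕ → ℝ := fun i => if i ≤ 13 then ρbase i else ρbase (27 - i)

/-- The contraction ratio ρ_i of F_i for 1 ≤ i ≤ 104. -/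
def rho : ℕ → ℝ := fun i =>
  if i ≤ 26 then ρq i
  else if i ≤ 100 then ρq (i - 25 * ((i - 1) / 25))
  else 1/4

end

/-- The horizontal middle strip [0,1] × [1/4,3/4]. -/
def midStrip : Set Plane := {z : Plane | z 0 ∈ Set.Icc (0:ℝ) 1 ∧ z 1 ∈ Set.Icc (1/4:ℝ) (3/4)}

open Set Metric
open scoped NNReal

section Attractor

variable {X : Type*} [MetricSpace X]

theorem Metric.infDist_apply_le_mul {f : X → X} {c : ℝ≥0} (hf : LipschitzWith c f) {B : Set X}
    (hBne : B.Nonempty) (hB : MapsTo f B B) (x : X) : infDist (f x) B ≤ c * infDist x B := by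
  have := hBne.to_subtype
  rw [infDist_eq_iInf (x := x), Real.mul_iInf_of_nonneg c.coe_nonneg]
  exact le_ciInf fun y => (infDist_le_dist_of_mem (hB y.2)).trans (hf.dist_le_mul x y)

/-- The point of `A` farthest from `B` is the image of a point of `A` at most `c` times as far,
so that distance is zero. -/
theorem subset_of_subset_biUnion_image {ι : Type*} {f : ι → X → X} {s : Set ι} {c : ℝ≥0}
    (hc : c < 1) (hf : ∀ i ∈ s, LipschitzWith c (f i)) {A B : Set X} (hA : IsCompact A)
    (hAf : A ⊆ ⋃ i ∈ s, f i '' A) (hB : IsClosed B) (hBne : B.Nonempty)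
    (hBf : ∀ i ∈ s, MapsTo (f i) B B) : A ⊆ B := by
  rcases A.eq_empty_or_nonempty with rfl | hAne
  · exact empty_subset B
  obtain ⟨z, hzA, hmax⟩ := hA.exists_isMaxOn hAne (continuous_infDist_pt B).continuousOn
  have hz : infDist z B ≤ c * infDist z B := by
    obtain ⟨i, hi, w, hwA, rfl⟩ : ∃ i ∈ s, ∃ w ∈ A, f i w = z := by simpa using hAf hzA
    exact (infDist_apply_le_mul (hf i hi) hBne (hBf i hi) w).trans
      (mul_le_mul_of_nonneg_left (hmax hwA) c.coe_nonneg)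
  have hz0 : infDist z B ≤ 0 := by
    have : (c : ℝ) < 1 := hc
    nlinarith [infDist_nonneg (x := z) (s := B)]
  intro y hy
  rw [← hB.closure_eq, mem_closure_iff_infDist_zero hBne]
  exact le_antisymm ((hmax hy).trans hz0) infDist_nonneg

theorem Set.mapsTo_of_eq_biUnion_image {α ι : Type*} {f : ι → α → α} {s : Set ι} {K : Set α}
    (hK : K = ⋃ i ∈ s, f i '' K) {i : ι} (hi : i ∈ s) : MapsTo (f i) K K :=
  mapsTo_iff_image_subset.2 <|
    (subset_iUnion₂ (s := fun i (_ : i ∈ s) => f i '' K) i hi).trans hK.ge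

end Attractor

theorem lipschitzWith_smul_add {E : Type*} [NormedAddCommGroup E] [NormedSpace ℝ E] {c : ℝ}
    {K : ℝ≥0} (hc : |c| ≤ K) (b : E) : LipschitzWith K fun x => c • x + b :=
  LipschitzWith.of_dist_le_mul fun x y => by
    rw [dist_add_right, dist_smul₀, Real.norm_eq_abs]
    exact mul_le_mul_of_nonneg_right hc dist_nonneg

@[simp] theorem pt_apply_zero (s t : ℝ) : pt s t 0 = s := rfl
@[simp] theorem pt_apply_one (s t : ℝ) : pt s t 1 = t := rfl

theorem pt_eta (z : Plane) : pt (z 0) (z 1) = z := by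
  ext i; fin_cases i <;> rfl

theorem continuous_pt_left (y : ℝ) : Continuous fun t : ℝ => pt t y := by
  unfold pt; fun_prop

theorem smul_add_pt_mem {c u v : ℝ} (hc : 0 ≤ c) {x : Plane} (hx : x ∈ unitSq) :
    (c • x + pt u v) 0 ∈ Icc u (u + c) ∧ (c • x + pt u v) 1 ∈ Icc v (v + c) := by
  obtain ⟨⟨hx0, hx0'⟩, hx1, hx1'⟩ := hx
  simp only [PiLp.add_apply, PiLp.smul_apply, smul_eq_mul, pt_apply_zero, pt_apply_one, mem_Icc]
  refine ⟨⟨?_, ?_⟩, ?_, ?_⟩ <;> nlinarith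

theorem mapsTo_smul_add_pt {c u v : ℝ} (hc : 0 ≤ c) (hu : 0 ≤ u) (hv : 0 ≤ v) (hu' : u + c ≤ 1)
    (hv' : v + c ≤ 1) : MapsTo (fun x => c • x + pt u v) unitSq unitSq := fun x hx => by
  obtain ⟨⟨h0, h0'⟩, h1, h1'⟩ := smul_add_pt_mem (u := u) (v := v) hc hx
  exact ⟨⟨by linarith, by linarith⟩, by linarith, by linarith⟩

theorem Γh_pt (s t : ℝ) : Γh (pt s t) = pt (1 - s) t := rfl
@[simp] theorem Γh_apply_zero (x : Plane) : Γh x 0 = 1 - x 0 := rfl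
@[simp] theorem Γh_apply_one (x : Plane) : Γh x 1 = x 1 := rfl
@[simp] theorem Γr_apply_zero (x : Plane) : Γr x 0 = 1 - x 1 := rfl
@[simp] theorem Γr_apply_one (x : Plane) : Γr x 1 = x 0 := rfl

theorem isometry_Γh : Isometry Γh := Isometry.of_dist_eq fun x y => by
  simp [EuclideanSpace.dist_eq, Fin.sum_univ_two, Γh, pt, Real.dist_eq, sq_abs]
  ring_nf

theorem isometry_Γr : Isometry Γr := Isometry.of_dist_eq fun x y => by
  simp [EuclideanSpace.dist_eq, Fin.sum_univ_two, Γr, pt, Real.dist_eq, sq_abs, add_comm]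
  ring_nf

theorem isClosed_unitSq : IsClosed unitSq :=
  (isClosed_Icc.preimage (by fun_prop)).inter (isClosed_Icc.preimage (by fun_prop))

theorem mapsTo_Γh : MapsTo Γh unitSq unitSq := fun x ⟨⟨h0, h0'⟩, h1⟩ =>
  ⟨⟨by simp; linarith, by simp; linarith⟩, h1⟩

theorem mapsTo_Γr : MapsTo Γr unitSq unitSq := fun x ⟨h0, h1, h1'⟩ =>
  ⟨⟨by simp; linarith, by simp; linarith⟩, h0⟩

theorem aa_sq_add_aa : aa ^ 2 + aa = 1 / 24 := by
  have h : Real.sqrt (7 / 24) ^ 2 = 7 / 24 := Real.sq_sqrt (by norm_num)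
  unfold aa
  nlinarith

theorem aa_pos : 0 < aa := by
  have : Real.sqrt (1 / 4) < Real.sqrt (7 / 24) := Real.sqrt_lt_sqrt (by norm_num) (by norm_num)
  rw [show (1 / 4 : ℝ) = (1 / 2) ^ 2 by norm_num, Real.sqrt_sq (by norm_num)] at this
  unfold aa
  linarith

theorem abs_ρbase_le (n : ℕ) : |ρbase n| ≤ 1 / 4 := by
  have := aa_sq_add_aa
  have := aa_pos
  unfold ρbase
  split_ifs <;> rw [abs_of_pos (by positivity)] <;> nlinarith

theorem Fbase_eq_smul_add (n : ℕ) : ∃ b, Fbase n = fun x => ρbase n • x + b := by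
  unfold Fbase ρbase
  split_ifs <;> exact ⟨_, rfl⟩

theorem lipschitzWith_Fbase (n : ℕ) : LipschitzWith (1 / 4) (Fbase n) := by
  obtain ⟨b, hb⟩ := Fbase_eq_smul_add n
  rw [hb]
  exact lipschitzWith_smul_add (by simpa using abs_ρbase_le n) b

theorem lipschitzWith_Fq (n : ℕ) : LipschitzWith (1 / 4) (Fq n) := by
  unfold Fq
  split_ifs
  · exact lipschitzWith_Fbase n
  · simpa using isometry_Γh.lipschitz.comp ((lipschitzWith_Fbase _).comp isometry_Γh.lipschitz)

theorem lipschitzWith_Fmap (n : ℕ) : LipschitzWith (1 / 4) (Fmap n) := by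
  unfold Fmap
  split_ifs
  · exact lipschitzWith_Fq n
  · simpa using (isometry_Γr.lipschitz.iterate _).comp
      ((lipschitzWith_Fq _).comp (isometry_Γr.lipschitz.iterate _))
  all_goals exact lipschitzWith_smul_add (by norm_num) _

theorem Fbase_odd {j : ℕ} (hj : j ≤ 5) : Fbase (2 * j + 1) = fun x => aa • x + pt (j / 24) 0 := by
  have hdiv : (2 * j + 1 - 1) / 2 = j := by omega
  funext x
  simp only [Fbase, if_neg (show 2 * j + 1 ≠ 13 by omega),
    if_pos (show (2 * j + 1) % 2 = 1 by omega), hdiv]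

theorem Fbase_even {j : ℕ} (hj : j ≤ 5) :
    Fbase (2 * j + 2) = fun x => aa ^ 2 • x + pt (aa + j / 24) 0 := by
  have hdiv : (2 * j + 2 - 2) / 2 = j := by omega
  funext x
  simp only [Fbase, if_neg (show 2 * j + 2 ≠ 13 by omega),
    if_neg (show ¬(2 * j + 2) % 2 = 1 by omega), hdiv]

theorem Fbase_thirteen : Fbase 13 = fun x => (1 / 4 : ℝ) • x + pt (1 / 4) 0 := rfl

theorem Fbase_apply_mem {m : ℕ} (h1 : 1 ≤ m) (h2 : m ≤ 13) {x : Plane} (hx : x ∈ unitSq) :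
    Fbase m x 0 ∈ Icc 0 (1 / 2) ∧ Fbase m x 1 ∈ Icc 0 (1 / 4) ∧ (m ≤ 12 → Fbase m x 0 ≤ 1 / 4) := by
  have hs := aa_sq_add_aa
  have hp := aa_pos
  rcases eq_or_ne m 13 with rfl | h13
  · obtain ⟨⟨h0, h0'⟩, h1, h1'⟩ :=
      smul_add_pt_mem (c := 1 / 4) (u := 1 / 4) (v := 0) (by norm_num) hx
    refine ⟨⟨?_, ?_⟩, ⟨?_, ?_⟩, by omega⟩ <;> simp only [Fbase_thirteen] <;> linarith
  obtain ⟨j, hj, rfl | rfl⟩ : ∃ j ≤ 5, m = 2 * j + 1 ∨ m = 2 * j + 2 :=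
    ⟨(m - 1) / 2, by omega, by omega⟩
  all_goals have hj' : (j : ℝ) ≤ 5 := by exact_mod_cast hj
  · obtain ⟨⟨h0, h0'⟩, h1, h1'⟩ := smul_add_pt_mem (u := j / 24) (v := 0) hp.le hx
    refine ⟨⟨?_, ?_⟩, ⟨?_, ?_⟩, fun _ => ?_⟩ <;> simp only [Fbase_odd hj] <;>
      nlinarith [Nat.cast_nonneg (α := ℝ) j]
  · obtain ⟨⟨h0, h0'⟩, h1, h1'⟩ := smul_add_pt_mem (u := aa + j / 24) (v := 0) (sq_nonneg aa) hx
    refine ⟨⟨?_, ?_⟩, ⟨?_, ?_⟩, fun _ => ?_⟩ <;> simp only [Fbase_even hj] <;>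
      nlinarith [Nat.cast_nonneg (α := ℝ) j]

theorem Fq_of_le {m : ℕ} (h : m ≤ 13) : Fq m = Fbase m := if_pos h

theorem Fq_twentySeven_sub {m : ℕ} (h : m ≤ 13) : Fq (27 - m) = Γh ∘ Fbase m ∘ Γh := by
  rw [Fq, if_neg (by omega), show 27 - (27 - m) = m by omega]

theorem Fq_apply_mem {m : ℕ} (h1 : 1 ≤ m) (h2 : m ≤ 26) {x : Plane} (hx : x ∈ unitSq) :
    Fq m x ∈ unitSq ∧ Fq m x 1 ≤ 1 / 4 ∧ (m ≠ 13 → m ≠ 14 → Fq m x 0 ∉ Ioo (1 / 4) (3 / 4)) := by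
  rcases le_or_gt m 13 with h | h
  · obtain ⟨⟨h0, h0'⟩, ⟨h1, h1'⟩, hle⟩ := Fbase_apply_mem h1 h hx
    rw [Fq_of_le h]
    exact ⟨⟨⟨h0, by linarith⟩, h1, by linarith⟩, h1',
      fun h13 _ hmem => (hle (by omega)).not_gt hmem.1⟩
  · obtain ⟨⟨h0, h0'⟩, ⟨h1, h1'⟩, hle⟩ := Fbase_apply_mem (m := 27 - m) (by omega) (by omega)
      (mapsTo_Γh hx)
    rw [show m = 27 - (27 - m) by omega, Fq_twentySeven_sub (by omega)]
    simp only [Function.comp_apply, unitSq, mem_ofPred_eq, mem_Icc, Γh_apply_zero, Γh_apply_one,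
      mem_Ioo, not_and_or, not_lt]
    exact ⟨⟨⟨by linarith, by linarith⟩, h1, by linarith⟩, h1',
      fun _ _ => Or.inr (by linarith [hle (by omega)])⟩

theorem Fmap_of_le {i : ℕ} (h : i ≤ 26) : Fmap i = Fq i := if_pos h

theorem Fmap_add_mul {m j : ℕ} (hm1 : 1 ≤ m) (hm2 : m ≤ 25) (hj : j ≤ 3) (h : 26 < m + 25 * j) :
    Fmap (m + 25 * j) = Γr^[j] ∘ Fq m ∘ Γr^[4 - j] := by
  have hdiv : (m + 25 * j - 1) / 25 = j := by omega
  rw [Fmap, if_neg (by omega), if_pos (by omega), hdiv, show m + 25 * j - 25 * j = m by omega]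

/-- `F_1` is a homothety centred at the corner `(0,0)`, so both conjugates of it are the
homothety of ratio `a` centred at `(0,1)`. -/
theorem Fmap_add_fifty {m : ℕ} (hm1 : 1 ≤ m) (hm2 : m ≤ 26) :
    Fmap (m + 50) = Γr^[2] ∘ Fq m ∘ Γr^[2] := by
  rcases hm2.eq_or_lt with rfl | hm
  · funext x; ext k; fin_cases k <;> simp [Fmap, Fq, Fbase, Γr, Γh, pt]
  · exact Fmap_add_mul (j := 2) hm1 (by omega) (by omega) (by omega)

theorem mapsTo_Fmap {i : ℕ} (h1 : 1 ≤ i) (h2 : i ≤ 104) : MapsTo (Fmap i) unitSq unitSq := by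
  have hFq : ∀ m, 1 ≤ m → m ≤ 26 → MapsTo (Fq m) unitSq unitSq :=
    fun m hm1 hm2 x hx => (Fq_apply_mem hm1 hm2 hx).1
  by_cases h26 : i ≤ 26
  · rw [Fmap_of_le h26]; exact hFq i h1 h26
  by_cases h100 : i ≤ 100
  · obtain ⟨m, j, hm1, hm2, hj, rfl⟩ : ∃ m j, 1 ≤ m ∧ m ≤ 25 ∧ j ≤ 3 ∧ i = m + 25 * j :=
      ⟨i - 25 * ((i - 1) / 25), (i - 1) / 25, by omega, by omega, by omega, by omega⟩
    rw [Fmap_add_mul hm1 hm2 hj (by omega)]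
    exact (mapsTo_Γr.iterate j).comp ((hFq m hm1 (by omega)).comp (mapsTo_Γr.iterate _))
  unfold Fmap
  split_ifs <;> exact mapsTo_smul_add_pt (by norm_num) (by norm_num) (by norm_num) (by norm_num)
    (by norm_num)

theorem exists_smul_add_pt_eq {c u t : ℝ} (hc : 0 < c) (h1 : u ≤ t) (h2 : t ≤ u + c) :
    ∃ s ∈ Icc (0 : ℝ) 1, c • pt s 0 + pt u 0 = pt t 0 := by
  refine ⟨(t - u) / c, ⟨div_nonneg (by linarith) hc.le, (div_le_one hc).2 (by linarith)⟩, ?_⟩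
  ext k; fin_cases k <;> simp [field]

/-- The cells `F_1, …, F_12` tile `[0, 1/4] × {0}` in six blocks `[j/24, (j+1)/24]`, each split
as `a + a² = 1/24`. -/
theorem exists_Fbase_apply_eq {t : ℝ} (h0 : 0 ≤ t) (h1 : t ≤ 1 / 2) :
    ∃ m, 1 ≤ m ∧ m ≤ 13 ∧ ∃ s ∈ Icc (0 : ℝ) 1, Fbase m (pt s 0) = pt t 0 := by
  rcases lt_or_ge (1 / 4) t with ht | ht
  · obtain ⟨s, hs, he⟩ := exists_smul_add_pt_eq (c := 1 / 4) (by norm_num) ht.le (by linarith)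
    exact ⟨13, by norm_num, le_rfl, s, hs, he⟩
  have hs := aa_sq_add_aa
  have hp := aa_pos
  obtain ⟨j, hj5, hjt, htj⟩ : ∃ j : ℕ, j ≤ 5 ∧ (j : ℝ) / 24 ≤ t ∧ t ≤ (j + 1) / 24 := by
    refine ⟨min ⌊24 * t⌋₊ 5, min_le_right _ _, ?_, ?_⟩
    · have : ((min ⌊24 * t⌋₊ 5 : ℕ) : ℝ) ≤ ⌊24 * t⌋₊ := by exact_mod_cast min_le_left _ _
      linarith [Nat.floor_le (show 0 ≤ 24 * t by linarith)]
    · rcases min_choice ⌊24 * t⌋₊ 5 with h | h <;> rw [h]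
      · linarith [Nat.lt_floor_add_one (24 * t)]
      · norm_num; linarith
  rcases le_or_gt t (j / 24 + aa) with hta | hta
  · obtain ⟨s, hs, he⟩ := exists_smul_add_pt_eq hp hjt hta
    exact ⟨2 * j + 1, by omega, by omega, s, hs, by rw [Fbase_odd hj5]; exact he⟩
  · obtain ⟨s, hs, he⟩ := exists_smul_add_pt_eq (pow_pos hp 2) (u := aa + j / 24) (t := t)
      (by linarith) (by linarith)
    exact ⟨2 * j + 2, by omega, by omega, s, hs, by rw [Fbase_even hj5]; exact he⟩

theorem exists_Fq_apply_eq {t : ℝ} (h0 : 0 ≤ t) (h1 : t ≤ 1) :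
    ∃ m, 1 ≤ m ∧ m ≤ 26 ∧ ∃ s ∈ Icc (0 : ℝ) 1, Fq m (pt s 0) = pt t 0 := by
  rcases le_or_gt t (1 / 2) with ht | ht
  · obtain ⟨m, hm1, hm2, s, hs, he⟩ := exists_Fbase_apply_eq h0 ht
    exact ⟨m, hm1, by omega, s, hs, by rw [Fq_of_le hm2, he]⟩
  · obtain ⟨m, hm1, hm2, s, ⟨hs0, hs1⟩, he⟩ :=
      exists_Fbase_apply_eq (t := 1 - t) (by linarith) (by linarith)
    refine ⟨27 - m, by omega, by omega, 1 - s, ⟨by linarith, by linarith⟩, ?_⟩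
    rw [Fq_twentySeven_sub hm2, Function.comp_apply, Function.comp_apply, Γh_pt, sub_sub_cancel,
      he, Γh_pt, sub_sub_cancel]

def horizSeg (y : ℝ) : Set Plane := (fun t => pt t y) '' Icc 0 1

theorem isCompact_horizSeg (y : ℝ) : IsCompact (horizSeg y) :=
  isCompact_Icc.image (continuous_pt_left y)

theorem horizSeg_zero_subset : horizSeg 0 ⊆ ⋃ i ∈ Finset.Icc 1 104, Fmap i '' horizSeg 0 := by
  rintro _ ⟨t, ⟨h0, h1⟩, rfl⟩
  obtain ⟨m, hm1, hm2, s, hs, he⟩ := exists_Fq_apply_eq h0 h1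
  exact mem_iUnion₂.2 ⟨m, Finset.mem_Icc.2 ⟨hm1, by omega⟩, pt s 0, ⟨s, hs, rfl⟩,
    by rw [Fmap_of_le hm2, he]⟩

theorem horizSeg_one_subset : horizSeg 1 ⊆ ⋃ i ∈ Finset.Icc 1 104, Fmap i '' horizSeg 1 := by
  rintro _ ⟨t, ⟨h0, h1⟩, rfl⟩
  obtain ⟨m, hm1, hm2, s, ⟨hs0, hs1⟩, he⟩ :=
    exists_Fq_apply_eq (t := 1 - t) (by linarith) (by linarith)
  refine mem_iUnion₂.2 ⟨m + 50, Finset.mem_Icc.2 ⟨by omega, by omega⟩, pt (1 - s) 1,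
    ⟨1 - s, ⟨by linarith, by linarith⟩, rfl⟩, ?_⟩
  have hrot : ∀ a b : ℝ, Γr^[2] (pt a b) = pt (1 - a) (1 - b) := fun _ _ => rfl
  rw [Fmap_add_fifty hm1 hm2, Function.comp_apply, Function.comp_apply, hrot, sub_sub_cancel,
    sub_self, he, hrot, sub_sub_cancel, sub_zero]

def stripCells : Finset ℕ := {38, 39, 88, 89, 101, 102, 103, 104}

theorem stripCells_subset : stripCells ⊆ Finset.Icc 1 104 := by decide

noncomputable def quarterMap (u v : ℝ) : Plane → Plane := fun x => (1 / 4 : ℝ) • x + pt u v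

theorem quarterMap_image_unitSq (u v : ℝ) :
    quarterMap u v '' unitSq = {z | z 0 ∈ Icc u (u + 1 / 4) ∧ z 1 ∈ Icc v (v + 1 / 4)} := by
  ext z
  constructor
  · rintro ⟨x, hx, rfl⟩
    exact smul_add_pt_mem (by norm_num) hx
  · rintro ⟨⟨h0, h0'⟩, h1, h1'⟩
    refine ⟨pt (4 * (z 0 - u)) (4 * (z 1 - v)), ⟨⟨?_, ?_⟩, ?_, ?_⟩, ?_⟩
    any_goals simp only [pt_apply_zero, pt_apply_one]; linarith
    rw [← pt_eta z]
    ext k; fin_cases k <;> simp [quarterMap]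

theorem Fmap_stripCells :
    Fmap 89 = quarterMap 0 (1 / 4) ∧ Fmap 101 = quarterMap (1 / 4) (1 / 4) ∧
    Fmap 102 = quarterMap (1 / 2) (1 / 4) ∧ Fmap 38 = quarterMap (3 / 4) (1 / 4) ∧
    Fmap 88 = quarterMap 0 (1 / 2) ∧ Fmap 104 = quarterMap (1 / 4) (1 / 2) ∧
    Fmap 103 = quarterMap (1 / 2) (1 / 2) ∧ Fmap 39 = quarterMap (3 / 4) (1 / 2) := by
  refine ⟨?_, ?_, ?_, ?_, ?_, ?_, ?_, ?_⟩ <;> funext x <;> ext k <;> fin_cases k <;>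
    simp [Fmap, Fq, Fbase, Γr, Γh, pt, quarterMap] <;> ring

theorem biUnion_image_unitSq_stripCells : ⋃ i ∈ stripCells, Fmap i '' unitSq = midStrip := by
  obtain ⟨h89, h101, h102, h38, h88, h104, h103, h39⟩ := Fmap_stripCells
  ext z
  constructor
  · simp only [stripCells, Finset.set_biUnion_insert, Finset.set_biUnion_singleton, h89, h101,
      h102, h38, h88, h104, h103, h39, quarterMap_image_unitSq, midStrip, mem_union,
      mem_ofPred_eq, mem_Icc]
    rintro (h | h | h | h | h | h | h | h) <;> norm_num at h ⊢ <;> constructor <;> constructor <;>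
      linarith
  · rintro ⟨⟨h0, h0'⟩, h1, h1'⟩
    obtain ⟨u, hu, hzu⟩ : ∃ u ∈ ({0, 1 / 4, 1 / 2, 3 / 4} : Set ℝ), z 0 ∈ Icc u (u + 1 / 4) := by
      rcases le_total (z 0) (1 / 4) with ha | ha
      · exact ⟨0, by simp, h0, by linarith⟩
      rcases le_total (z 0) (1 / 2) with hb | hb
      · exact ⟨1 / 4, by simp, ha, by linarith⟩
      rcases le_total (z 0) (3 / 4) with hc | hc
      exacts [⟨1 / 2, by simp, hb, by linarith⟩, ⟨3 / 4, by simp, hc, by linarith⟩]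
    obtain ⟨v, hv, hzv⟩ : ∃ v ∈ ({1 / 4, 1 / 2} : Set ℝ), z 1 ∈ Icc v (v + 1 / 4) := by
      rcases le_total (z 1) (1 / 2) with hd | hd
      exacts [⟨1 / 4, by simp, h1, by linarith⟩, ⟨1 / 2, by simp, hd, by linarith⟩]
    obtain ⟨i, hi, hF⟩ : ∃ i ∈ stripCells, Fmap i = quarterMap u v := by
      rcases hu with rfl | rfl | rfl | rfl <;> rcases hv with rfl | rfl
      exacts [⟨89, by decide, h89⟩, ⟨88, by decide, h88⟩, ⟨101, by decide, h101⟩,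
        ⟨104, by decide, h104⟩, ⟨102, by decide, h102⟩, ⟨103, by decide, h103⟩,
        ⟨38, by decide, h38⟩, ⟨39, by decide, h39⟩]
    exact mem_iUnion₂.2 ⟨i, hi, by rw [hF, quarterMap_image_unitSq]; exact ⟨hzu, hzv⟩⟩

theorem exists_Fmap_eq_quarterMap {i : ℕ} (hi : i ∈ stripCells) :
    ∃ u v, v ∈ Icc (1 / 4 : ℝ) (1 / 2) ∧ Fmap i = quarterMap u v := by
  obtain ⟨h89, h101, h102, h38, h88, h104, h103, h39⟩ := Fmap_stripCells
  simp only [stripCells, Finset.mem_insert, Finset.mem_singleton] at hi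
  rcases hi with rfl | rfl | rfl | rfl | rfl | rfl | rfl | rfl
  exacts [⟨_, _, by norm_num, h38⟩, ⟨_, _, by norm_num, h39⟩, ⟨_, _, by norm_num, h88⟩,
    ⟨_, _, by norm_num, h89⟩, ⟨_, _, by norm_num, h101⟩, ⟨_, _, by norm_num, h102⟩,
    ⟨_, _, by norm_num, h103⟩, ⟨_, _, by norm_num, h104⟩]

theorem Fmap_apply_one_notMem_Ioo {i : ℕ} (hi : i ∈ Finset.Icc 1 104) (hS : i ∉ stripCells)
    {x : Plane} (hx : x ∈ unitSq) : Fmap i x 1 ∉ Ioo (1 / 4) (3 / 4) := by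
  obtain ⟨hi1, hi2⟩ := Finset.mem_Icc.1 hi
  simp only [stripCells, Finset.mem_insert, Finset.mem_singleton, not_or] at hS
  by_cases h26 : i ≤ 26
  · rw [Fmap_of_le h26]
    exact fun h => h.1.not_ge (Fq_apply_mem hi1 h26 hx).2.1
  obtain ⟨m, j, hm1, hm2, hj1, hj3, rfl⟩ :
      ∃ m j, 1 ≤ m ∧ m ≤ 25 ∧ 1 ≤ j ∧ j ≤ 3 ∧ i = m + 25 * j :=
    ⟨i - 25 * ((i - 1) / 25), (i - 1) / 25, by omega, by omega, by omega, by omega, by omega⟩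
  rw [Fmap_add_mul hm1 hm2 hj3 (by omega), Function.comp_apply, Function.comp_apply]
  obtain ⟨-, hy, hx'⟩ := Fq_apply_mem hm1 (by omega) (mapsTo_Γr.iterate (4 - j) hx)
  interval_cases j <;>
    simp only [Function.iterate_succ_apply', Function.iterate_zero_apply, Γr_apply_zero,
      Γr_apply_one, mem_Ioo, not_and_or, not_lt] at hy hx' ⊢
  · exact hx' (by omega) (by omega)
  · exact Or.inr (by linarith)
  · rcases hx' (by omega) (by omega) with h | h
    exacts [Or.inr (by linarith), Or.inl (by linarith)]

theorem biUnion_image_stripCells_eq_inter {K : Set Plane}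
    (hK : K = ⋃ i ∈ Finset.Icc 1 104, Fmap i '' K) (hKsq : K ⊆ unitSq) (hbot : horizSeg 0 ⊆ K)
    (htop : horizSeg 1 ⊆ K) : ⋃ i ∈ stripCells, Fmap i '' K = K ∩ midStrip := by
  refine Subset.antisymm (iUnion₂_subset fun i hi => subset_inter
    (mapsTo_of_eq_biUnion_image hK (s := Finset.Icc 1 104) (stripCells_subset hi)).image_subset
    ?_) ?_
  · rw [← biUnion_image_unitSq_stripCells]
    exact (image_mono hKsq).trans
      (subset_iUnion₂ (s := fun i (_ : i ∈ stripCells) => Fmap i '' unitSq) i hi)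
  rintro z ⟨hzK, hz⟩
  by_cases hzI : z 1 ∈ Ioo (1 / 4) (3 / 4)
  · obtain ⟨i, hi, k, hk, rfl⟩ : ∃ i ∈ Finset.Icc 1 104, ∃ k ∈ K, Fmap i k = z := by
      rw [hK] at hzK; simpa using hzK
    have hiS : i ∈ stripCells := by
      by_contra hS
      exact Fmap_apply_one_notMem_Ioo hi hS (hKsq hk) hzI
    exact mem_iUnion₂.2 ⟨i, hiS, k, hk, rfl⟩
  -- on the lines `y = 1/4` and `y = 3/4` the preimage lies on the bottom or top edge of the square
  rw [← biUnion_image_unitSq_stripCells] at hz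
  obtain ⟨i, hi, k, ⟨⟨hk0, hk0'⟩, hk1, hk1'⟩, rfl⟩ :
      ∃ i ∈ stripCells, ∃ k ∈ unitSq, Fmap i k = z := by
    simpa using hz
  obtain ⟨u, v, ⟨hv, hv'⟩, hF⟩ := exists_Fmap_eq_quarterMap hi
  refine mem_iUnion₂.2 ⟨i, hi, k, ?_, rfl⟩
  simp only [hF, quarterMap, PiLp.add_apply, PiLp.smul_apply, smul_eq_mul, pt_apply_one, mem_Ioo,
    not_and_or, not_lt] at hzI
  rw [← pt_eta k]
  rcases hzI with h | h
  · exact hbot ⟨k 0, ⟨hk0, hk0'⟩, by rw [show k 1 = 0 by linarith]⟩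
  · exact htop ⟨k 0, ⟨hk0, hk0'⟩, by rw [show k 1 = 1 by linarith]⟩

/-- For S = {38,39,88,89,101,102,103,104}: each F_i with i ∈ S has contraction ratio 1/4,
    the eight quarter-squares F_i(□) tile the middle strip ⋃_{i∈S} F_i(□) = [0,1]×[1/4,3/4],
    and ⋃_{i∈S} F_i(K) = K ∩ ([0,1]×[1/4,3/4]). -/
theorem stmt9 (K : Set Plane) (hne : K.Nonempty) (hcomp : IsCompact K)
    (hK : K = ⋃ i ∈ Finset.Icc 1 104, Fmap i '' K) :
    (∀ i ∈ ({38, 39, 88, 89, 101, 102, 103, 104} : Finset ℕ), rho i = 1/4) ∧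
    (⋃ i ∈ ({38, 39, 88, 89, 101, 102, 103, 104} : Finset ℕ), Fmap i '' unitSq) = midStrip ∧
    (⋃ i ∈ ({38, 39, 88, 89, 101, 102, 103, 104} : Finset ℕ), Fmap i '' K) = K ∩ midStrip := by
  have hlip : ∀ i ∈ (Finset.Icc 1 104 : Set ℕ), LipschitzWith (1 / 4) (Fmap i) :=
    fun i _ => lipschitzWith_Fmap i
  have hKsq : K ⊆ unitSq := subset_of_subset_biUnion_image (by norm_num) hlip hcomp hK.le
    isClosed_unitSq ⟨pt 0 0, by simp [unitSq]⟩
    fun i hi => mapsTo_Fmap (Finset.mem_Icc.1 hi).1 (Finset.mem_Icc.1 hi).2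
  have hedge : ∀ y, horizSeg y ⊆ ⋃ i ∈ Finset.Icc 1 104, Fmap i '' horizSeg y → horizSeg y ⊆ K :=
    fun y hy => subset_of_subset_biUnion_image (by norm_num) hlip (isCompact_horizSeg y) hy
      hcomp.isClosed hne fun i hi => mapsTo_of_eq_biUnion_image hK hi
  refine ⟨?_, biUnion_image_unitSq_stripCells, biUnion_image_stripCells_eq_inter hK hKsq
    (hedge 0 horizSeg_zero_subset) (hedge 1 horizSeg_one_subset)⟩
  intro i hi
  fin_cases hi <;> norm_num [rho, ρq, ρbase]
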